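/- Let (λ_1,...,λ_m) solve the system Σ_{(b_k,...,b_1)∈Ξ_k} ∏_j λ_j^{b_j}/b_j! = 1 (k=1,...,m), and define γ(k,k') as the sum of weights of directed paths in G_m from (k,k') to (0,0), where an edge ((ℓ+1,c),(ℓ,c'')) has weight λ_ℓ^{c-c''}/(c-c'')! and γ(0,0) = 1. Then for every k ∈ {1,...,m}: λ_k > 0 and 1 = γ(k,k) > γ(k,k+1) > ... > γ(k,m). -/

import Mathlib

open Finset

/-- `sumFrom b k'` is `b_k + b_{k-1} + ⋯ + b_{k'}`, where the `Fin k`-index `j`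
encodes the subscript `j+1` (so `b ⟨0,_⟩ = b₁`, …, `b ⟨k-1,_⟩ = b_k`). -/
def sumFrom {k : ℕ} (b : Fin k → ℕ) (k' : ℕ) : ℕ :=
  ∑ ℓ : Fin k, if k' ≤ ℓ.val + 1 then b ℓ else 0

/-- The set `Ξ̂_k` of non-negative integer vectors `(b_k, …, b_1)` with
`b_k + ⋯ + b_{k'} + k' ≤ k + 1` for all `1 ≤ k' ≤ k` and total sum at least `1`. -/
def XiHat (k : ℕ) : Set (Fin k → ℕ) :=
  {b | (∀ k', 1 ≤ k' → k' ≤ k → sumFrom b k' + k' ≤ k + 1) ∧ 1 ≤ ∑ ℓ, b ℓ}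

/-- `Ξ_k`: vectors of `Ξ̂_k` having no proper left truncated subvector
`(b_{k'}, …, b_1)` in `Ξ̂_{k'}` for any `k' < k`. -/
def Xi (k : ℕ) : Set (Fin k → ℕ) :=
  {b | b ∈ XiHat k ∧
    ∀ k' (h : k' < k), (fun j : Fin k' => b (Fin.castLE h.le j)) ∉ XiHat k'}

/-- The equality system `∑_{(b_k,…,b_1) ∈ Ξ_k} ∏_j λ_j^{b_j}/b_j! = 1` for `k = 1, …, m`. -/
def eqSystem (m : ℕ) (lam : ℕ → ℝ) : Prop :=
  ∀ k, 1 ≤ k → k ≤ m →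
    ∑ᶠ b ∈ Xi k, ∏ j : Fin k, lam (j.val + 1) ^ (b j) / (Nat.factorial (b j)) = 1

/-- `gamma lam k k'` is the total weight of directed paths on `G_m` from `(k,k')`
to `(0,0)`, where an edge from `(ℓ+1, c)` to `(ℓ, c'')` (with `c ≥ c''`) has
weight `λ_{ℓ+1}^{c-c''}/(c-c'')!` and `gamma lam 0 0 = 1`. -/
noncomputable def gamma (lam : ℕ → ℝ) : ℕ → ℕ → ℝ
  | 0, 0 => 1
  | 0, _ + 1 => 0
  | k + 1, k' =>
      ∑ c ∈ Finset.Icc k k',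
        lam (k + 1) ^ (k' - c) / (Nat.factorial (k' - c)) * gamma lam k c

/-!
Read `b ∈ Ξ_k` as the step lengths of a path in `G` from `(k, k)`. The minimality condition
defining `Ξ_k` says exactly that the path comes back to the diagonal at some `(j, j)` with `j < k`,
staying strictly above it in between, and that `b` vanishes below level `j`. Splitting the paths
counted by `γ(k, k)` at their first return to the diagonal thus gives
`γ(k, k) = ∑_{b ∈ Ξ_k} ∏ λ_j^{b_j} / b_j!` as soon as `γ(j, j) = 1` for all `j < k`, and the
equation system yields `γ(k, k) = 1` by induction on `k`.

Row `k + 1` of `γ` is the convolution of row `k` with the weights `λ_{k+1}^i / i!`. Hence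
`1 = γ(k+1, k+1) = γ(k, k+1) + λ_{k+1}`, so `λ_{k+1} = γ(k, k) - γ(k, k+1) > 0`; and comparing
consecutive terms of the convolution, row `k + 1` decreases strictly because row `k` decreases
and `1 / n! > 1 / (n+1)!` for `n ≥ 1`.
-/

section sumFrom

variable {k : ℕ}

lemma sumFrom_one (b : Fin k → ℕ) : sumFrom b 1 = ∑ ℓ, b ℓ := by
  simp [sumFrom]

lemma sumFrom_one_eq_zero_iff {b : Fin k → ℕ} : sumFrom b 1 = 0 ↔ b = 0 := by
  simp [sumFrom_one, funext_iff]

lemma le_sumFrom_one (b : Fin k → ℕ) (ℓ : Fin k) : b ℓ ≤ sumFrom b 1 :=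
  sumFrom_one b ▸ single_le_sum (fun _ _ => Nat.zero_le _) (mem_univ ℓ)

lemma sumFrom_antitone (b : Fin k → ℕ) : Antitone (sumFrom b) := fun _ _ h =>
  sum_le_sum fun _ _ => by split_ifs <;> omega

lemma sumFrom_of_lt (b : Fin k → ℕ) {i : ℕ} (h : k < i) : sumFrom b i = 0 :=
  sum_eq_zero fun _ _ => if_neg (by omega)

lemma sumFrom_eq_last_add_init (b : Fin (k + 1) → ℕ) {i : ℕ} (hi : i ≤ k + 1) :
    sumFrom b i = b (Fin.last k) + sumFrom (Fin.init b) i := by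
  rw [sumFrom, Fin.sum_univ_castSucc, if_pos (by simpa using hi), add_comm]
  rfl

lemma sumFrom_eq_trunc_add {K : ℕ} (h : K ≤ k) (b : Fin k → ℕ) {i : ℕ} (hi : i ≤ K + 1) :
    sumFrom b i = sumFrom (fun j : Fin K => b (Fin.castLE h j)) i + sumFrom b (K + 1) := by
  obtain ⟨r, rfl⟩ := Nat.exists_eq_add_of_le h
  have htail : ∀ i ≤ K + 1,
      ∑ ℓ : Fin r, (if i ≤ (Fin.natAdd K ℓ : ℕ) + 1 then b (Fin.natAdd K ℓ) else 0) =
        ∑ ℓ : Fin r, b (Fin.natAdd K ℓ) :=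
    fun i hi => sum_congr rfl fun ℓ _ => if_pos (by simp; omega)
  have hhead :
      ∑ ℓ : Fin K, (if K + 1 ≤ (Fin.castAdd r ℓ : ℕ) + 1 then b (Fin.castAdd r ℓ) else 0) = 0 :=
    sum_eq_zero fun ℓ _ => if_neg (by simp)
  simp only [sumFrom, Fin.sum_univ_add, htail i hi, htail (K + 1) le_rfl, hhead, zero_add]
  rfl

end sumFrom

lemma trunc_mem_XiHat_iff {k K : ℕ} (h : K < k) (b : Fin k → ℕ) :
    (fun j : Fin K => b (Fin.castLE h.le j)) ∈ XiHat K ↔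
      (∀ i, 1 ≤ i → i ≤ K → sumFrom b i + i ≤ K + 1 + sumFrom b (K + 1)) ∧
        sumFrom b (K + 1) < sumFrom b 1 := by
  have htrunc := fun i (hi : i ≤ K + 1) => sumFrom_eq_trunc_add h.le b hi
  have h1 := htrunc 1 (by omega)
  simp only [XiHat, Set.mem_ofPred_eq, ← sumFrom_one]
  constructor
  · rintro ⟨hle, hpos⟩
    exact ⟨fun i hi hiK => by have := hle i hi hiK; have := htrunc i (by omega); omega, by omega⟩
  · rintro ⟨hle, hlt⟩
    exact ⟨fun i hi hiK => by have := hle i hi hiK; have := htrunc i (by omega); omega, by omega⟩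

/-- Read `b = (b_ℓ, …, b_1)` as the step lengths of a path in `G` from `(ℓ, c)`, which is at
`(i, c - sumFrom b (i + 1))` on level `i`. The path is an excursion if, after its start, it
stays strictly above the diagonal until it meets it at some level `j < ℓ`, and `b` vanishes below
level `j`. -/
def IsExcursion (c : ℕ) {ℓ : ℕ} (b : Fin ℓ → ℕ) : Prop :=
  ∃ j < ℓ, sumFrom b 1 + j = c ∧ sumFrom b (j + 1) = sumFrom b 1 ∧
    ∀ i, j < i → i < ℓ → sumFrom b (i + 1) + i < c

/- The path meets the diagonal at the last level `K` where its height
`k - sumFrom b (K + 1) - K` above the diagonal is minimal: otherwise the truncation of `b` at `K`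
would lie in `Ξ̂_K`. -/
lemma isExcursion_of_mem_Xi {k : ℕ} {b : Fin k → ℕ} (hb : b ∈ Xi k) : IsExcursion k b := by
  obtain ⟨⟨hhat, hpos⟩, hnot⟩ := hb
  rw [← sumFrom_one] at hpos
  have hk : 0 < k := Nat.pos_of_ne_zero fun hk => by
    subst hk; rw [sumFrom_of_lt b one_pos] at hpos; omega
  set f : ℕ → ℕ := fun ℓ => sumFrom b (ℓ + 1) + ℓ with hf
  obtain ⟨K₀, hK₀k, hK₀⟩ := (range k).exists_max_image f ⟨0, mem_range.2 hk⟩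
  obtain ⟨K, hK, hlast⟩ :=
    ((range k).filter (f · = f K₀)).exists_max_image id ⟨K₀, by simpa using hK₀k⟩
  simp only [mem_filter, mem_range, id] at hK hlast
  have hmax : ∀ ℓ < k, f ℓ ≤ f K := fun ℓ hℓ => hK.2 ▸ hK₀ ℓ (mem_range.2 hℓ)
  have hlt : ∀ ℓ, K < ℓ → ℓ < k → f ℓ < f K := fun ℓ hKℓ hℓ =>
    (hmax ℓ hℓ).lt_of_ne fun he => (hlast ℓ ⟨hℓ, he.trans hK.2⟩).not_gt hKℓ
  have hflat : sumFrom b (K + 1) = sumFrom b 1 := by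
    refine le_antisymm (sumFrom_antitone b (by omega)) (not_lt.1 fun hlt' => hnot K hK.1 ?_)
    refine (trunc_mem_XiHat_iff hK.1 b).2 ⟨fun i hi hiK => ?_, hlt'⟩
    have := hmax (i - 1) (by omega)
    simp only [hf, Nat.sub_add_cancel hi] at this
    omega
  have hK_le := hhat (K + 1) (by omega) (by omega)
  have hlevel : sumFrom b 1 + K = k := by
    by_contra hne
    have hk1 : f (k - 1) = f K := le_antisymm (hmax _ (by omega)) (by simp only [hf]; omega)
    have : k - 1 ≤ K := (le_or_gt _ _).resolve_right fun h => (hlt _ h (by omega)).ne hk1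
    simp only [hf, Nat.sub_add_cancel hk] at hk1
    omega
  refine ⟨K, hK.1, hlevel, hflat, fun i hi hik => ?_⟩
  have := hlt i hi hik
  simp only [hf] at this
  omega

lemma mem_Xi_of_isExcursion {k : ℕ} {b : Fin k → ℕ} (hb : IsExcursion k b) : b ∈ Xi k := by
  obtain ⟨j, hj, hlevel, hflat, habove⟩ := hb
  refine ⟨⟨fun i hi hik => ?_, by rw [← sumFrom_one]; omega⟩, fun K hK hmem => ?_⟩
  · rcases le_or_gt i (j + 1) with hij | hij
    · have := sumFrom_antitone b hi
      omega
    · have := habove (i - 1) (by omega) (by omega)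
      rw [Nat.sub_add_cancel hi] at this
      omega
  · obtain ⟨hle, hlt⟩ := (trunc_mem_XiHat_iff hK b).1 hmem
    have hjK : j + 1 ≤ K := by
      by_contra
      have := sumFrom_antitone b (show K + 1 ≤ j + 1 by omega)
      omega
    have := hle (j + 1) (by omega) hjK
    have := habove K (by omega) hK
    omega

lemma mem_Xi_iff {k : ℕ} {b : Fin k → ℕ} : b ∈ Xi k ↔ IsExcursion k b :=
  ⟨isExcursion_of_mem_Xi, mem_Xi_of_isExcursion⟩

def IsFirstHit (c : ℕ) {ℓ : ℕ} (b : Fin ℓ → ℕ) : Prop :=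
  (c = ℓ ∧ b = 0) ∨ (ℓ < c ∧ IsExcursion c b)

lemma isExcursion_succ_iff {ℓ c : ℕ} (b : Fin (ℓ + 1) → ℕ) :
    IsExcursion c b ↔ b (Fin.last ℓ) ≤ c ∧ IsFirstHit (c - b (Fin.last ℓ)) (Fin.init b) := by
  have hsplit := fun i (hi : i ≤ ℓ + 1) => sumFrom_eq_last_add_init b hi
  have h1 := hsplit 1 (by omega)
  have htop := hsplit (ℓ + 1) le_rfl
  rw [sumFrom_of_lt _ (Nat.lt_succ_self ℓ)] at htop
  simp only [IsFirstHit, IsExcursion, ← sumFrom_one_eq_zero_iff]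
  constructor
  · rintro ⟨j, hj, hlevel, hflat, habove⟩
    refine ⟨by omega, ?_⟩
    rcases (Nat.lt_succ_iff.1 hj).eq_or_lt with rfl | hjℓ
    · exact Or.inl ⟨by omega, by omega⟩
    · have := habove ℓ hjℓ (by omega)
      refine Or.inr ⟨by omega, j, hjℓ, by omega, ?_, fun i hji hiℓ => ?_⟩
      · have := hsplit (j + 1) (by omega)
        omega
      · have := habove i hji (by omega)
        have := hsplit (i + 1) (by omega)
        omega
  · rintro ⟨hle, ⟨hc, hzero⟩ | ⟨hc, j, hj, hlevel, hflat, habove⟩⟩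
    · exact ⟨ℓ, by omega, by omega, by omega, fun i hi hi' => by omega⟩
    · refine ⟨j, by omega, by omega, ?_, fun i hji hiℓ => ?_⟩
      · have := hsplit (j + 1) (by omega)
        omega
      · rcases (Nat.lt_succ_iff.1 hiℓ).eq_or_lt with rfl | hiℓ'
        · omega
        · have := habove i hji hiℓ'
          have := hsplit (i + 1) (by omega)
          omega

lemma IsExcursion.le {ℓ c : ℕ} {b : Fin ℓ → ℕ} (hb : IsExcursion c b) (i : Fin ℓ) : b i ≤ c := by
  obtain ⟨j, -, hlevel, -⟩ := hb
  have := le_sumFrom_one b i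
  omega

lemma IsFirstHit.le {ℓ c : ℕ} {b : Fin ℓ → ℕ} (hb : IsFirstHit c b) (i : Fin ℓ) : b i ≤ c := by
  rcases hb with ⟨-, rfl⟩ | ⟨-, hb⟩
  · exact Nat.zero_le c
  · exact hb.le i

open scoped Classical in
noncomputable def excursions (ℓ c : ℕ) : Finset (Fin ℓ → ℕ) :=
  {b ∈ Fintype.piFinset fun _ => range (c + 1) | IsExcursion c b}

open scoped Classical in
noncomputable def firstHits (ℓ c : ℕ) : Finset (Fin ℓ → ℕ) :=
  {b ∈ Fintype.piFinset fun _ => range (c + 1) | IsFirstHit c b}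

lemma mem_excursions {ℓ c : ℕ} {b : Fin ℓ → ℕ} : b ∈ excursions ℓ c ↔ IsExcursion c b := by
  simpa [excursions, Nat.lt_succ_iff] using fun hb _ => hb.le _

lemma mem_firstHits {ℓ c : ℕ} {b : Fin ℓ → ℕ} : b ∈ firstHits ℓ c ↔ IsFirstHit c b := by
  simpa [firstHits, Nat.lt_succ_iff] using fun hb _ => hb.le _

lemma firstHits_self (ℓ : ℕ) : firstHits ℓ ℓ = {0} := by
  ext b
  simp [mem_firstHits, IsFirstHit]

lemma firstHits_of_lt {ℓ c : ℕ} (h : ℓ < c) : firstHits ℓ c = excursions ℓ c := by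
  ext b
  simp [mem_firstHits, mem_excursions, IsFirstHit, h, h.ne']

lemma excursions_zero (c : ℕ) : excursions 0 c = ∅ := by
  ext b
  simp [mem_excursions, IsExcursion]

lemma Xi_eq_excursions (k : ℕ) : Xi k = excursions k k := by
  ext b
  simp [mem_Xi_iff, mem_excursions]

noncomputable def pathWeight (lam : ℕ → ℝ) {ℓ : ℕ} (b : Fin ℓ → ℕ) : ℝ :=
  ∏ j : Fin ℓ, lam (j.val + 1) ^ (b j) / (Nat.factorial (b j))

lemma pathWeight_zero (lam : ℕ → ℝ) (ℓ : ℕ) : pathWeight lam (0 : Fin ℓ → ℕ) = 1 := by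
  simp [pathWeight]

lemma pathWeight_succ (lam : ℕ → ℝ) {ℓ : ℕ} (b : Fin (ℓ + 1) → ℕ) :
    pathWeight lam b = lam (ℓ + 1) ^ (b (Fin.last ℓ)) / (Nat.factorial (b (Fin.last ℓ))) *
      pathWeight lam (Fin.init b) := by
  rw [pathWeight, Fin.prod_univ_castSucc, mul_comm]
  rfl

lemma sum_excursions_succ (lam : ℕ → ℝ) (ℓ c : ℕ) :
    ∑ b ∈ excursions (ℓ + 1) c, pathWeight lam b =
      ∑ c' ∈ Icc ℓ c, lam (ℓ + 1) ^ (c - c') / (Nat.factorial (c - c')) *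
        ∑ b ∈ firstHits ℓ c', pathWeight lam b := by
  have hfiber : ∀ {c'} (b : Fin (ℓ + 1) → ℕ), c' ∈ Icc ℓ c →
      ((b ∈ excursions (ℓ + 1) c ∧ c - b (Fin.last ℓ) = c') ↔
        (b (Fin.last ℓ) = c - c' ∧ Fin.init b ∈ firstHits ℓ c')) := by
    intro c' b hc'
    rw [mem_Icc] at hc'
    rw [mem_excursions, mem_firstHits, isExcursion_succ_iff]
    constructor
    · rintro ⟨⟨hle, hb⟩, rfl⟩
      exact ⟨by omega, hb⟩
    · rintro ⟨hlast, hb⟩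
      exact ⟨⟨by omega, by rwa [show c - b (Fin.last ℓ) = c' by omega]⟩, by omega⟩
  have hmaps : ∀ b ∈ excursions (ℓ + 1) c, c - b (Fin.last ℓ) ∈ Icc ℓ c := by
    intro b hb
    obtain ⟨hle, ⟨hc, -⟩ | ⟨hc, -⟩⟩ := (isExcursion_succ_iff b).1 (mem_excursions.1 hb) <;>
      simp only [mem_Icc] <;> omega
  rw [← sum_fiberwise_of_maps_to hmaps]
  refine sum_congr rfl fun c' hc' => ?_
  rw [mul_sum]
  refine sum_nbij' Fin.init (Fin.snoc · (c - c')) (fun b hb => ?_) (fun b hb => ?_)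
    (fun b hb => ?_) (fun b _ => Fin.init_snoc _ _) (fun b hb => ?_)
  · rw [mem_filter, hfiber b hc'] at hb
    exact hb.2
  · rw [mem_filter, hfiber _ hc', Fin.snoc_last, Fin.init_snoc]
    exact ⟨rfl, hb⟩
  · rw [mem_filter, hfiber b hc'] at hb
    simp only [← hb.1, Fin.snoc_init_self]
  · rw [mem_filter, hfiber b hc'] at hb
    rw [pathWeight_succ, hb.1]

section gamma

variable (lam : ℕ → ℝ)

lemma gamma_zero_zero : gamma lam 0 0 = 1 := by
  rw [gamma]

lemma gamma_zero_of_pos {c : ℕ} (hc : 0 < c) : gamma lam 0 c = 0 := by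
  obtain ⟨c, rfl⟩ := Nat.exists_eq_add_of_lt hc
  rw [gamma]

lemma gamma_succ (ℓ c : ℕ) :
    gamma lam (ℓ + 1) c = ∑ c' ∈ Icc ℓ c,
      lam (ℓ + 1) ^ (c - c') / (Nat.factorial (c - c')) * gamma lam ℓ c' := by
  rw [gamma]

lemma sum_excursions_succ_eq_gamma {ℓ : ℕ}
    (hfirst : ∀ c', ℓ ≤ c' → ∑ b ∈ firstHits ℓ c', pathWeight lam b = gamma lam ℓ c') (c : ℕ) :
    ∑ b ∈ excursions (ℓ + 1) c, pathWeight lam b = gamma lam (ℓ + 1) c := by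
  rw [sum_excursions_succ, gamma_succ]
  exact sum_congr rfl fun c' hc' => by rw [hfirst c' (mem_Icc.1 hc').1]

lemma sum_firstHits_eq_gamma {ℓ : ℕ} (hdiag : ∀ j ≤ ℓ, gamma lam j j = 1) {c : ℕ} (hc : ℓ ≤ c) :
    ∑ b ∈ firstHits ℓ c, pathWeight lam b = gamma lam ℓ c := by
  rcases hc.eq_or_lt with rfl | hlt
  · rw [firstHits_self, sum_singleton, pathWeight_zero, hdiag ℓ le_rfl]
  rw [firstHits_of_lt hlt]
  cases ℓ with
  | zero => rw [excursions_zero, sum_empty, gamma_zero_of_pos lam hlt]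
  | succ ℓ =>
    exact sum_excursions_succ_eq_gamma lam
      (fun c' hc' => sum_firstHits_eq_gamma (fun j hj => hdiag j (by omega)) hc') c

lemma gamma_self_eq_one {m : ℕ} (h : eqSystem m lam) {k : ℕ} (hk : k ≤ m) : gamma lam k k = 1 := by
  induction k using Nat.strong_induction_on with
  | _ k ih =>
    cases k with
    | zero => exact gamma_zero_zero lam
    | succ ℓ =>
      have hdiag : ∀ j ≤ ℓ, gamma lam j j = 1 := fun j hj => ih j (by omega) (by omega)
      rw [← sum_excursions_succ_eq_gamma lam (fun c' => sum_firstHits_eq_gamma lam hdiag),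
        ← h (ℓ + 1) (by omega) hk, Xi_eq_excursions, finsum_mem_coe_finset]
      rfl

end gamma

noncomputable def expConv (x : ℝ) (a : ℕ → ℝ) (n : ℕ) : ℝ :=
  ∑ i ∈ range (n + 1), x ^ i / (Nat.factorial i) * a (n - i)

lemma expConv_one (x : ℝ) (a : ℕ → ℝ) : expConv x a 1 = a 1 + x * a 0 := by
  simp [expConv, sum_range_succ]

/- `expConv x a n - expConv x a (n + 1)` is a sum of non-negative terms plus
`x ^ n / n! * (a 0 - a 1) - x ^ (n + 1) / (n + 1)! * a 0`, which is
`x ^ (n + 1) / n! - x ^ (n + 1) / (n + 1)! > 0`. -/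
lemma expConv_succ_lt {x : ℝ} (hx : 0 < x) {a : ℕ → ℝ} (h0 : a 0 = 1) (h1 : a 1 = 1 - x)
    {n : ℕ} (hn : 1 ≤ n) (ha : ∀ i, 1 ≤ i → i ≤ n → a (i + 1) ≤ a i) :
    expConv x a (n + 1) < expConv x a n := by
  have hsum : ∑ i ∈ range n, x ^ i / (Nat.factorial i) * a (n + 1 - i)
      ≤ ∑ i ∈ range n, x ^ i / (Nat.factorial i) * a (n - i) := by
    refine sum_le_sum fun i hi => mul_le_mul_of_nonneg_left ?_ (by positivity)
    rw [mem_range] at hi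
    rw [show n + 1 - i = n - i + 1 by omega]
    exact ha (n - i) (by omega) (by omega)
  have hfact : x ^ (n + 1) / (Nat.factorial (n + 1)) < x ^ n / (Nat.factorial n) * x := by
    rw [← mul_div_right_comm, ← pow_succ]
    exact div_lt_div_of_pos_left (by positivity) (by positivity)
      (by exact_mod_cast (Nat.factorial_lt (by omega)).2 (Nat.lt_succ_self n))
  rw [expConv, sum_range_succ, sum_range_succ, expConv, sum_range_succ]
  rw [Nat.add_sub_cancel_left, Nat.sub_self, Nat.sub_self, h0, h1]
  linarith

lemma gamma_succ_eq_expConv (lam : ℕ → ℝ) (K n : ℕ) :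
    gamma lam (K + 1) (K + n) = expConv (lam (K + 1)) (fun j => gamma lam K (K + j)) n := by
  rw [gamma_succ, expConv]
  refine sum_nbij' (fun c => K + n - c) (fun i => K + n - i) (fun c hc => ?_) (fun i hi => ?_)
    (fun c hc => ?_) (fun i hi => ?_) (fun c hc => ?_) <;>
    simp only [mem_Icc, mem_range] at * <;>
    try omega
  rw [show K + (n - (K + n - c)) = c by omega]

lemma pos_and_gamma_succ_strictAnti {lam : ℕ → ℝ} {m K : ℕ} (hKK : gamma lam K K = 1)
    (hKK' : gamma lam (K + 1) (K + 1) = 1) (hlt : gamma lam K (K + 1) < 1)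
    (hanti : ∀ k', K + 1 ≤ k' → k' < m → gamma lam K (k' + 1) ≤ gamma lam K k') :
    0 < lam (K + 1) ∧
      ∀ k', K + 1 ≤ k' → k' < m → gamma lam (K + 1) (k' + 1) < gamma lam (K + 1) k' := by
  have hstep : gamma lam K (K + 1) = 1 - lam (K + 1) := by
    have := gamma_succ_eq_expConv lam K 1
    rw [expConv_one, hKK', add_zero, hKK] at this
    linarith
  have hpos : 0 < lam (K + 1) := by linarith
  refine ⟨hpos, fun k' hk' hk'm => ?_⟩
  obtain ⟨n, rfl⟩ := Nat.exists_eq_add_of_le (show K ≤ k' by omega)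
  rw [show K + n + 1 = K + (n + 1) by omega, gamma_succ_eq_expConv, gamma_succ_eq_expConv]
  exact expConv_succ_lt hpos hKK hstep (by omega)
    fun i hi hin => hanti (K + i) (by omega) (by omega)

lemma pos_and_gamma_strictAnti {lam : ℕ → ℝ} {m : ℕ} (h : eqSystem m lam) (K : ℕ)
    (hK : K + 1 ≤ m) : 0 < lam (K + 1) ∧
      ∀ k', K + 1 ≤ k' → k' < m → gamma lam (K + 1) (k' + 1) < gamma lam (K + 1) k' := by
  induction K with
  | zero =>
    refine pos_and_gamma_succ_strictAnti (gamma_zero_zero lam) (gamma_self_eq_one lam h hK)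
      (by rw [gamma_zero_of_pos lam (by omega)]; exact one_pos) fun k' hk' _ => ?_
    rw [gamma_zero_of_pos lam (by omega), gamma_zero_of_pos lam (by omega)]
  | succ K ih =>
    have hrow := (ih (by omega)).2
    have hKK := gamma_self_eq_one lam h (show K + 1 ≤ m by omega)
    exact pos_and_gamma_succ_strictAnti hKK (gamma_self_eq_one lam h hK)
      (hKK ▸ hrow (K + 1) le_rfl (by omega)) fun k' hk' hk'm => (hrow k' (by omega) hk'm).le

/-- If `(λ_1,…,λ_m)` solves the equation system, then for every `k ∈ {1,…,m}`:
`λ_k > 0` and `1 = γ(k,k) > γ(k,k+1) > ⋯ > γ(k,m)`. -/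
theorem gamma_strict_anti (m : ℕ) (lam : ℕ → ℝ) (h : eqSystem m lam) :
    ∀ k, 1 ≤ k → k ≤ m → 0 < lam k ∧ gamma lam k k = 1 ∧
      ∀ k', k ≤ k' → k' < m → gamma lam k (k' + 1) < gamma lam k k' := by
  intro k hk hkm
  obtain ⟨K, rfl⟩ := Nat.exists_eq_add_of_le' hk
  obtain ⟨hpos, hanti⟩ := pos_and_gamma_strictAnti h K hkm
  exact ⟨hpos, gamma_self_eq_one lam h hkm, hanti⟩
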